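/- arXiv:2106.13070 — 2 statements merged into one kernel-verified Lean document; each statement's English description precedes it below -/
import Mathlib

section
/- Let I ⊆ ℝ be an interval and p ≥ 2. If M : I^p → I^p is a weakly contractive mean-type mapping (not necessarily continuous), then there exists at most one continuous mean K : I^p → I satisfying K ∘ M = K. -/
/-!
Fix `v` and let `S` be the set of vectors in the cube `[min v, max v]^p` at which `K₁ - K₂`
takes its value at `v`. By continuity and invariance, `S` is compact and mapped into itself
by `M`. A vector of minimal spread `max - min` in `S` must be constant, since otherwise some
iterate of it under `M` would lie in `S` and have smaller spread. Both means agree at a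
constant vector, hence at `v`.
-/

open Set Filter Topology

noncomputable def vmax {p : ℕ} (v : Fin p → ℝ) : ℝ := ⨆ i, v i
noncomputable def vmin {p : ℕ} (v : Fin p → ℝ) : ℝ := ⨅ i, v i

/-- The "box" `I^p`. -/
def box (I : Set ℝ) (p : ℕ) : Set (Fin p → ℝ) := {v | ∀ i, v i ∈ I}

/-- `K` is a mean on `I^p`: internality. -/
def IsMeanOn (I : Set ℝ) (p : ℕ) (K : (Fin p → ℝ) → ℝ) : Prop :=
  ∀ v ∈ box I p, vmin v ≤ K v ∧ K v ≤ vmax v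

/-- `M` is a mean-type mapping: each coordinate is a mean. -/
def MeanType (I : Set ℝ) (p : ℕ) (M : (Fin p → ℝ) → (Fin p → ℝ)) : Prop :=
  ∀ v ∈ box I p, ∀ i, vmin v ≤ M v i ∧ M v i ≤ vmax v

def Nonconstant {p : ℕ} (v : Fin p → ℝ) : Prop := ¬ ∃ c, ∀ i, v i = c

def Contractive (I : Set ℝ) (p : ℕ) (M : (Fin p → ℝ) → (Fin p → ℝ)) : Prop :=
  ∀ v ∈ box I p, Nonconstant v → vmax (M v) - vmin (M v) < vmax v - vmin v

def WeaklyContractive (I : Set ℝ) (p : ℕ) (M : (Fin p → ℝ) → (Fin p → ℝ)) : Prop :=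
  ∀ v ∈ box I p, Nonconstant v → ∃ n₀ : ℕ, ∀ n ≥ n₀,
    vmax (M^[n] v) - vmin (M^[n] v) < vmax v - vmin v

/-- `T(a) = {v ∈ I^p : max v - min v ≤ a}`. -/
def Tset (I : Set ℝ) (p : ℕ) (a : ℝ) : Set (Fin p → ℝ) :=
  {v ∈ box I p | vmax v - vmin v ≤ a}

section Spread

variable {p : ℕ}

lemma vmax_le_vmin_of_isEmpty [IsEmpty (Fin p)] (v : Fin p → ℝ) : vmax v ≤ vmin v := by
  simp [vmax, vmin]

lemma le_vmax (v : Fin p → ℝ) (i : Fin p) : v i ≤ vmax v :=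
  le_ciSup (Finite.bddAbove_range v) i

lemma vmin_le (v : Fin p → ℝ) (i : Fin p) : vmin v ≤ v i :=
  ciInf_le (Finite.bddBelow_range v) i

variable [Nonempty (Fin p)]

lemma vmax_le {v : Fin p → ℝ} {b : ℝ} (h : ∀ i, v i ≤ b) : vmax v ≤ b :=
  ciSup_le h

lemma le_vmin {v : Fin p → ℝ} {a : ℝ} (h : ∀ i, a ≤ v i) : a ≤ vmin v :=
  le_ciInf h

lemma vmax_mem_of_mem_box {I : Set ℝ} {v : Fin p → ℝ} (hv : v ∈ box I p) : vmax v ∈ I := by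
  obtain ⟨i, hi⟩ := exists_eq_ciSup_of_finite (f := v)
  rw [vmax, ← hi]
  exact hv i

lemma vmin_mem_of_mem_box {I : Set ℝ} {v : Fin p → ℝ} (hv : v ∈ box I p) : vmin v ∈ I := by
  obtain ⟨i, hi⟩ := exists_eq_ciInf_of_finite (f := v)
  rw [vmin, ← hi]
  exact hv i

lemma continuous_vmax : Continuous (vmax : (Fin p → ℝ) → ℝ) := by
  have h : vmax = fun v : Fin p → ℝ => Finset.univ.sup' Finset.univ_nonempty fun i => v i :=
    funext fun v => (Finset.sup'_univ_eq_ciSup v).symm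
  exact h ▸ Continuous.finset_sup'_apply _ fun i _ => continuous_apply i

lemma continuous_vmin : Continuous (vmin : (Fin p → ℝ) → ℝ) := by
  have h : vmin = fun v : Fin p → ℝ => Finset.univ.inf' Finset.univ_nonempty fun i => v i :=
    funext fun v => (Finset.inf'_univ_eq_ciInf v).symm
  exact h ▸ Continuous.finset_inf'_apply _ fun i _ => continuous_apply i

lemma nonconstant_of_vmin_lt_vmax {v : Fin p → ℝ} (h : vmin v < vmax v) : Nonconstant v := by
  rintro ⟨c, hc⟩
  have hmax : vmax v ≤ c := vmax_le fun i => (hc i).le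
  have hmin : c ≤ vmin v := le_vmin fun i => (hc i).ge
  linarith

end Spread

variable {I : Set ℝ} {p : ℕ}

lemma Icc_vmin_vmax_subset [Nonempty (Fin p)] (hI : I.OrdConnected) {v : Fin p → ℝ}
    (hv : v ∈ box I p) : Icc (vmin v) (vmax v) ⊆ I :=
  hI.out (vmin_mem_of_mem_box hv) (vmax_mem_of_mem_box hv)

lemma pi_Icc_subset_box {a b : ℝ} (hab : Icc a b ⊆ I) :
    univ.pi (fun _ => Icc a b) ⊆ box I p :=
  fun _ hw i => hab (hw i (mem_univ i))

lemma MeanType.mapsTo_pi_Icc {M : (Fin p → ℝ) → (Fin p → ℝ)} (hM : MeanType I p M) {a b : ℝ}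
    (hab : Icc a b ⊆ I) :
    MapsTo M (univ.pi fun _ => Icc a b) (univ.pi fun _ => Icc a b) := by
  intro w hw
  have hwI := pi_Icc_subset_box hab hw
  rw [mem_univ_pi] at hw ⊢
  intro i
  have : Nonempty (Fin p) := ⟨i⟩
  obtain ⟨hlo, hhi⟩ := hM w hwI i
  exact ⟨(le_vmin fun j => (hw j).1).trans hlo, hhi.trans (vmax_le fun j => (hw j).2)⟩

lemma IsMeanOn.apply_eq_vmin {K : (Fin p → ℝ) → ℝ} (hK : IsMeanOn I p K) {v : Fin p → ℝ}
    (hv : v ∈ box I p) (h : vmax v ≤ vmin v) : K v = vmin v :=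
  le_antisymm ((hK v hv).2.trans h) (hK v hv).1

lemma WeaklyContractive.exists_vmax_le_vmin [Nonempty (Fin p)] {M : (Fin p → ℝ) → (Fin p → ℝ)}
    (hW : WeaklyContractive I p M) {S : Set (Fin p → ℝ)} (hSc : IsCompact S) (hSne : S.Nonempty)
    (hSI : S ⊆ box I p) (hMS : MapsTo M S S) : ∃ w ∈ S, vmax w ≤ vmin w := by
  obtain ⟨w, hwS, hmin⟩ :=
    hSc.exists_isMinOn hSne (continuous_vmax.sub continuous_vmin).continuousOn
  refine ⟨w, hwS, not_lt.1 fun hlt => ?_⟩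
  obtain ⟨n, hn⟩ := hW w (hSI hwS) (nonconstant_of_vmin_lt_vmax hlt)
  exact (hn n le_rfl).not_ge (hmin (hMS.iterate n hwS))

theorem stmt1_general (I : Set ℝ) (hI : I.OrdConnected) (p : ℕ)
    (M : (Fin p → ℝ) → (Fin p → ℝ)) (hMT : MeanType I p M)
    (hW : WeaklyContractive I p M)
    (K₁ K₂ : (Fin p → ℝ) → ℝ)
    (h₁m : IsMeanOn I p K₁) (h₁c : ContinuousOn K₁ (box I p))
    (h₁i : ∀ v ∈ box I p, K₁ (M v) = K₁ v)
    (h₂m : IsMeanOn I p K₂) (h₂c : ContinuousOn K₂ (box I p))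
    (h₂i : ∀ v ∈ box I p, K₂ (M v) = K₂ v) :
    ∀ v ∈ box I p, K₁ v = K₂ v := by
  intro v hv
  have agree_of_const : ∀ w ∈ box I p, vmax w ≤ vmin w → K₁ w = K₂ w := fun w hw h =>
    (h₁m.apply_eq_vmin hw h).trans (h₂m.apply_eq_vmin hw h).symm
  rcases isEmpty_or_nonempty (Fin p) with _ | _
  · exact agree_of_const v hv (vmax_le_vmin_of_isEmpty v)
  set C := univ.pi fun _ : Fin p => Icc (vmin v) (vmax v)
  have hIcc : Icc (vmin v) (vmax v) ⊆ I := Icc_vmin_vmax_subset hI hv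
  have hCI : C ⊆ box I p := pi_Icc_subset_box hIcc
  set S := C ∩ (fun w => K₁ w - K₂ w) ⁻¹' {K₁ v - K₂ v}
  have hSc : IsCompact S := (isCompact_univ_pi fun _ => isCompact_Icc).of_isClosed_subset
    (((h₁c.sub h₂c).mono hCI).preimage_isClosed_of_isClosed
      (isClosed_set_pi fun _ _ => isClosed_Icc) isClosed_singleton) inter_subset_left
  have hvS : v ∈ S := ⟨fun i _ => ⟨vmin_le v i, le_vmax v i⟩, rfl⟩
  have hMS : MapsTo M S S := fun w ⟨hwC, hwK⟩ =>
    ⟨hMT.mapsTo_pi_Icc hIcc hwC, by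
      simpa only [mem_preimage, h₁i w (hCI hwC), h₂i w (hCI hwC)] using hwK⟩
  obtain ⟨w, ⟨hwC, hwK⟩, hw⟩ :=
    hW.exists_vmax_le_vmin hSc ⟨v, hvS⟩ (inter_subset_left.trans hCI) hMS
  have hK : K₁ w - K₂ w = K₁ v - K₂ v := hwK
  linarith [agree_of_const w (hCI hwC) hw]

theorem stmt1 (I : Set ℝ) (hI : I.OrdConnected) (p : ℕ) (hp : 2 ≤ p)
    (M : (Fin p → ℝ) → (Fin p → ℝ)) (hMT : MeanType I p M)
    (hW : WeaklyContractive I p M)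
    (K₁ K₂ : (Fin p → ℝ) → ℝ)
    (h₁m : IsMeanOn I p K₁) (h₁c : ContinuousOn K₁ (box I p))
    (h₁i : ∀ v ∈ box I p, K₁ (M v) = K₁ v)
    (h₂m : IsMeanOn I p K₂) (h₂c : ContinuousOn K₂ (box I p))
    (h₂i : ∀ v ∈ box I p, K₂ (M v) = K₂ v) :
    ∀ v ∈ box I p, K₁ v = K₂ v :=
  stmt1_general I hI p M hMT hW K₁ K₂ h₁m h₁c h₁i h₂m h₂c h₂i
end

section
/- Let I ⊆ ℝ be an interval, p ≥ 2, M : I^p → I^p a contractive mean-type mapping, and F : I^p → [0,∞) an M-invariant function. Define T(a) := {v ∈ I^p : max(v) − min(v) ≤ a}. Then for every a > 0, F(T(a)) = ⋃_{α ∈ [0,a)} F(T(α)), i.e., the set-valued map a ↦ F(T(a)) is left-continuous. -/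
open Set Filter Topology

/-! The inclusion `⊇` is monotonicity of `T`. For `⊆`, a vector of oscillation exactly `a > 0`
is nonconstant, so one application of `M` strictly lowers its oscillation below `a`; `M` keeps
the vector in `I^p` because its coordinates are means and `I` is an interval, and `F` does not
see the step because it is `M`-invariant. -/

section Oscillation

variable {p : ℕ}

lemma vmin_le_vmax (v : Fin p → ℝ) : vmin v ≤ vmax v := by
  rcases isEmpty_or_nonempty (Fin p) with hp | hp
  · simp only [vmin, vmax, Real.iInf_of_isEmpty, Real.iSup_of_isEmpty, le_refl]
  · exact ciInf_le_ciSup (finite_range v).bddBelow (finite_range v).bddAbove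

lemma vmax_sub_vmin_nonneg (v : Fin p → ℝ) : 0 ≤ vmax v - vmin v :=
  sub_nonneg.2 (vmin_le_vmax v)

lemma nonconstant_of_vmax_sub_vmin_ne_zero {v : Fin p → ℝ} (h : vmax v - vmin v ≠ 0) :
    Nonconstant v := by
  rintro ⟨c, hc⟩
  have hv : v = fun _ => c := funext hc
  rcases isEmpty_or_nonempty (Fin p) with hp | hp
  · simp [vmax, vmin, Real.iSup_of_isEmpty, Real.iInf_of_isEmpty] at h
  · simp [hv, vmax, vmin] at h

end Oscillation

lemma Tset_mono {I : Set ℝ} {p : ℕ} {a b : ℝ} (hab : a ≤ b) : Tset I p a ⊆ Tset I p b :=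
  fun _ ⟨hv, hva⟩ => ⟨hv, hva.trans hab⟩

lemma mem_Tset_vmax_sub_vmin {I : Set ℝ} {p : ℕ} {v : Fin p → ℝ} (hv : v ∈ box I p) :
    v ∈ Tset I p (vmax v - vmin v) :=
  ⟨hv, le_rfl⟩

lemma MeanType.mapsTo_box {I : Set ℝ} (hI : I.OrdConnected) {p : ℕ}
    {M : (Fin p → ℝ) → (Fin p → ℝ)} (hM : MeanType I p M) : MapsTo M (box I p) (box I p) := by
  intro v hv i
  have : Nonempty (Fin p) := ⟨i⟩
  obtain ⟨imin, himin⟩ := exists_eq_ciInf_of_finite (f := v)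
  obtain ⟨imax, himax⟩ := exists_eq_ciSup_of_finite (f := v)
  refine hI.out (hv imin) (hv imax) ⟨?_, ?_⟩
  · exact himin ▸ (hM v hv i).1
  · exact himax ▸ (hM v hv i).2

theorem stmt7_general (I : Set ℝ) (hI : I.OrdConnected) (p : ℕ)
    (M : (Fin p → ℝ) → (Fin p → ℝ)) (hMT : MeanType I p M) (hC : Contractive I p M)
    (F : (Fin p → ℝ) → ℝ)
    (hFi : ∀ v ∈ box I p, F (M v) = F v) :
    ∀ a : ℝ, 0 < a →
      F '' Tset I p a = ⋃ α ∈ Set.Ico (0:ℝ) a, F '' Tset I p α := by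
  intro a ha
  refine Subset.antisymm ?_ (iUnion₂_subset fun α hα => image_mono (Tset_mono hα.2.le))
  rintro _ ⟨v, ⟨hv, hva⟩, rfl⟩
  rcases hva.lt_or_eq with hlt | heq
  · exact mem_iUnion₂.2 ⟨_, ⟨vmax_sub_vmin_nonneg v, hlt⟩, v, mem_Tset_vmax_sub_vmin hv, rfl⟩
  · have hnc : Nonconstant v := nonconstant_of_vmax_sub_vmin_ne_zero (heq ▸ ha.ne')
    have hMv : M v ∈ box I p := hMT.mapsTo_box hI hv
    exact mem_iUnion₂.2 ⟨_, ⟨vmax_sub_vmin_nonneg (M v), heq ▸ hC v hv hnc⟩,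
      M v, mem_Tset_vmax_sub_vmin hMv, hFi v hv⟩

theorem stmt7 (I : Set ℝ) (hI : I.OrdConnected) (p : ℕ) (hp : 2 ≤ p)
    (M : (Fin p → ℝ) → (Fin p → ℝ)) (hMT : MeanType I p M) (hC : Contractive I p M)
    (F : (Fin p → ℝ) → ℝ) (hF0 : ∀ v ∈ box I p, 0 ≤ F v)
    (hFi : ∀ v ∈ box I p, F (M v) = F v) :
    ∀ a : ℝ, 0 < a →
      F '' Tset I p a = ⋃ α ∈ Set.Ico (0:ℝ) a, F '' Tset I p α :=
  stmt7_general I hI p M hMT hC F hFi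
end
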